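/- arXiv:2505.11125 — 2 statements merged into one kernel-verified Lean document; each statement's English description precedes it below -/
import Mathlib

section
/- Let F, F' ⊆ V × R × V be two knowledge graphs over finite types V and R. Then the symmetric difference of their Relation-Dependency Graph edge sets is controlled by the symmetric difference of their fact sets: |Φ(F) Δ Φ(F')| ≤ 2·|R|·|F Δ F'|. In particular, two knowledge graphs differing in at most k facts have relation graphs differing in at most 2·k·|R| edges. (Supporting claim of the Perturbation Stability theorem.) -/
/-- The relation adjacency operator: `Φ(F)` is the edge set of the
Relation-Dependency Graph of the knowledge graph `F`. -/
def relPhi {V R : Type*} (F : Set (V × R × V)) : Set (R × R) :=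
  {p | ∃ e e' e'' : V, (e, p.1, e') ∈ F ∧ (e', p.2, e'') ∈ F}

/-- The symmetric difference of the Relation-Dependency Graph edge sets of two
knowledge graphs is controlled by the symmetric difference of their fact sets:
`|Φ(F) Δ Φ(F')| ≤ 2 · |R| · |F Δ F'|`. -/
theorem rdg_symmDiff_le
    {V R : Type*} [Fintype V] [Fintype R]
    (F F' : Set (V × R × V)) :
    (symmDiff (relPhi F) (relPhi F')).ncard ≤
      2 * Fintype.card R * (symmDiff F F').ncard := by
  classical
  have hD : (symmDiff F F').Finite := Set.toFinite _
  set Dfin : Finset (V × R × V) := hD.toFinset with hDfin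
  set T : (V × R × V) → Finset (R × R) :=
    fun f => ({f.2.1} ×ˢ Finset.univ) ∪ (Finset.univ ×ˢ {f.2.1}) with hT
  have hsub : symmDiff (relPhi F) (relPhi F') ⊆ ↑(Dfin.biUnion T) := by
    intro p hp
    have key : ∃ f ∈ symmDiff F F', f.2.1 = p.1 ∨ f.2.1 = p.2 := by
      rw [Set.mem_symmDiff] at hp
      rcases hp with ⟨⟨e, e', e'', h1, h2⟩, hn⟩ | ⟨⟨e, e', e'', h1, h2⟩, hn⟩
      · by_cases h1' : (e, p.1, e') ∈ F'
        · by_cases h2' : (e', p.2, e'') ∈ F'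
          · exact absurd ⟨e, e', e'', h1', h2'⟩ hn
          · exact ⟨(e', p.2, e''), Set.mem_symmDiff.2 (Or.inl ⟨h2, h2'⟩), Or.inr rfl⟩
        · exact ⟨(e, p.1, e'), Set.mem_symmDiff.2 (Or.inl ⟨h1, h1'⟩), Or.inl rfl⟩
      · by_cases h1' : (e, p.1, e') ∈ F
        · by_cases h2' : (e', p.2, e'') ∈ F
          · exact absurd ⟨e, e', e'', h1', h2'⟩ hn
          · exact ⟨(e', p.2, e''), Set.mem_symmDiff.2 (Or.inr ⟨h2, h2'⟩), Or.inr rfl⟩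
        · exact ⟨(e, p.1, e'), Set.mem_symmDiff.2 (Or.inr ⟨h1, h1'⟩), Or.inl rfl⟩
    obtain ⟨f, hf, h | h⟩ := key
    · simp only [Finset.coe_biUnion, Set.mem_iUnion]
      exact ⟨f, by simpa [hDfin] using hf, by simp [hT, Finset.mem_union, h]⟩
    · simp only [Finset.coe_biUnion, Set.mem_iUnion]
      exact ⟨f, by simpa [hDfin] using hf, by simp [hT, Finset.mem_union, h]⟩
  have hTcard : ∀ f, (T f).card ≤ 2 * Fintype.card R := by
    intro f
    calc (T f).card ≤ ({f.2.1} ×ˢ (Finset.univ : Finset R)).card +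
        ((Finset.univ : Finset R) ×ˢ {f.2.1}).card := Finset.card_union_le _ _
      _ = 2 * Fintype.card R := by
          simp [Finset.card_product]; ring
  calc (symmDiff (relPhi F) (relPhi F')).ncard
      ≤ (↑(Dfin.biUnion T) : Set (R × R)).ncard :=
        Set.ncard_le_ncard hsub (Set.toFinite _)
    _ = (Dfin.biUnion T).card := Set.ncard_coe_finset _
    _ ≤ ∑ f ∈ Dfin, (T f).card := Finset.card_biUnion_le
    _ ≤ ∑ _f ∈ Dfin, 2 * Fintype.card R := Finset.sum_le_sum fun f _ => hTcard f
    _ = 2 * Fintype.card R * Dfin.card := by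
        rw [Finset.sum_const, smul_eq_mul, mul_comm]
    _ = 2 * Fintype.card R * (symmDiff F F').ncard := by
        rw [hDfin, Set.ncard_eq_toFinset_card _ hD]
end

section
/- Quadratic KL bound under bounded score perturbation: Let ι be a nonempty finite type, s : ι → ℝ a score function, δ ≥ 0, and Δ : ι → ℝ with |Δᵢ| ≤ δ for all i. Let p = softmax(s) and q = softmax(s + Δ). Then KL(p‖q) = Σᵢ pᵢ·log(pᵢ/qᵢ) ≤ δ²/2. (This makes precise the claim, in the proof of the Relation-Dependency Faithfulness theorem, that the KL divergence between the true and estimated softmax distributions is bounded by a constant times the square of the pointwise approximation error of the scoring function.) -/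
/-!
Writing `p = softmax s`, the ratio `pᵢ / softmax (s + Δ)ᵢ` equals `e^{-Δᵢ} · Σⱼ pⱼ e^{Δⱼ}`, so the
divergence is `log 𝔼_p[e^Δ] - 𝔼_p[Δ]`, the centred cumulant generating function of `Δ` at `1`.
Since `Δ` takes values in `[-δ, δ]`, Hoeffding's lemma bounds it by `(2δ)² / 8 = δ² / 2`.
-/

/-- The softmax distribution of a score function `s`. -/
noncomputable def softmax {ι : Type*} [Fintype ι] (s : ι → ℝ) : ι → ℝ :=
  fun i => Real.exp (s i) / ∑ j, Real.exp (s j)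

open Finset Real MeasureTheory ProbabilityTheory

theorem sum_mul_exp_le_exp_of_mem_Icc {ι : Type*} [Fintype ι] {p X : ι → ℝ} {a b : ℝ}
    (hp : ∀ i, 0 ≤ p i) (hp1 : ∑ i, p i = 1) (hX : ∀ i, X i ∈ Set.Icc a b) :
    ∑ i, p i * exp (X i) ≤ exp (∑ i, p i * X i + (b - a) ^ 2 / 8) := by
  -- View `p` as a probability measure on `ι` to apply Mathlib's Hoeffding lemma.
  let _ : MeasurableSpace ι := ⊤
  let μ := PMF.ofFintype (fun i ↦ ENNReal.ofReal (p i)) <| by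
    rw [← ENNReal.ofReal_sum_of_nonneg fun i _ ↦ hp i, hp1, ENNReal.ofReal_one]
  have hμ (f : ι → ℝ) : ∫ i, f i ∂μ.toMeasure = ∑ i, p i * f i := by
    simp [μ, PMF.integral_eq_sum, PMF.ofFintype_apply, ENNReal.toReal_ofReal (hp _)]
  have := (hasSubgaussianMGF_of_mem_Icc (μ := μ.toMeasure) (Measurable.of_discrete).aemeasurable
    (ae_of_all _ hX)).mgf_le 1
  simp only [mgf, hμ, one_mul, mul_sub, exp_sub, ← mul_div_assoc, ← sum_div] at this
  have hc : (((‖b - a‖₊ / 2) ^ 2 : NNReal) : ℝ) * 1 ^ 2 / 2 = (b - a) ^ 2 / 8 := by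
    push_cast [coe_nnnorm, Real.norm_eq_abs, div_pow, sq_abs]
    ring
  rwa [hc, div_le_iff₀ (exp_pos _), ← exp_add, add_comm] at this

section Softmax

variable {ι : Type*} [Fintype ι] [Nonempty ι]

theorem sum_exp_pos (s : ι → ℝ) : 0 < ∑ j, exp (s j) :=
  sum_pos (fun _ _ ↦ exp_pos _) univ_nonempty

theorem softmax_pos (s : ι → ℝ) (i : ι) : 0 < softmax s i :=
  div_pos (exp_pos _) (sum_exp_pos s)

theorem sum_softmax (s : ι → ℝ) : ∑ i, softmax s i = 1 := by
  simp only [softmax, ← sum_div, div_self (sum_exp_pos s).ne']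

theorem sum_softmax_mul_exp_pos (s Δ : ι → ℝ) : 0 < ∑ j, softmax s j * exp (Δ j) :=
  sum_pos (fun j _ ↦ mul_pos (softmax_pos s j) (exp_pos _)) univ_nonempty

theorem softmax_add_apply (s Δ : ι → ℝ) (i : ι) :
    softmax (s + Δ) i = softmax s i * exp (Δ i) / ∑ j, softmax s j * exp (Δ j) := by
  simp only [softmax, Pi.add_apply, exp_add, div_mul_eq_mul_div, ← sum_div]
  rw [div_div_div_cancel_right₀ (sum_exp_pos s).ne']

theorem log_softmax_div_softmax_add (s Δ : ι → ℝ) (i : ι) :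
    log (softmax s i / softmax (s + Δ) i) = log (∑ j, softmax s j * exp (Δ j)) - Δ i := by
  rw [softmax_add_apply, div_div_eq_mul_div, mul_div_mul_left _ _ (softmax_pos s i).ne',
    log_div (sum_softmax_mul_exp_pos s Δ).ne' (exp_pos _).ne', log_exp]

theorem kl_softmax_softmax_add (s Δ : ι → ℝ) :
    ∑ i, softmax s i * log (softmax s i / softmax (s + Δ) i) =
      log (∑ j, softmax s j * exp (Δ j)) - ∑ i, softmax s i * Δ i := by
  simp only [log_softmax_div_softmax_add, mul_sub, sum_sub_distrib, ← sum_mul, sum_softmax,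
    one_mul]

end Softmax

theorem kl_softmax_perturbation_bound_general
    {ι : Type*} [Fintype ι] [Nonempty ι]
    (s : ι → ℝ) (δ : ℝ) (Δ : ι → ℝ) (hΔ : ∀ i, |Δ i| ≤ δ) :
    ∑ i, softmax s i * Real.log (softmax s i / softmax (s + Δ) i) ≤
      δ ^ 2 / 2 := by
  have hoeffding := sum_mul_exp_le_exp_of_mem_Icc (fun i ↦ (softmax_pos s i).le) (sum_softmax s)
    (fun i ↦ abs_le.mp (hΔ i))
  rw [kl_softmax_softmax_add, sub_le_iff_le_add', log_le_iff_le_exp (sum_softmax_mul_exp_pos s Δ)]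
  convert hoeffding using 3
  ring

/-- Quadratic KL bound under bounded score perturbation: if `|Δᵢ| ≤ δ` for all
`i`, then `KL(softmax s ‖ softmax (s + Δ)) ≤ δ²/2`. -/
theorem kl_softmax_perturbation_bound
    {ι : Type*} [Fintype ι] [Nonempty ι]
    (s : ι → ℝ) (δ : ℝ) (hδ : 0 ≤ δ) (Δ : ι → ℝ) (hΔ : ∀ i, |Δ i| ≤ δ) :
    ∑ i, softmax s i * Real.log (softmax s i / softmax (s + Δ) i) ≤
      δ ^ 2 / 2 :=
  kl_softmax_perturbation_bound_general s δ Δ hΔ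
end
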